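/- Fourier coefficients of the hyperplane-averaged function: Let d ≥ 2, let e be a unit vector in ℝ^d, and let u : ℝ^d → ℂ be continuous and ℤ^d-periodic. For t > 0 define Q(x,t) = ∫_{⟨e⟩^⊥} u(x + y) (4πt)^{-(d-1)/2} exp(−‖y‖²/(4t)) dℋ^{d-1}(y). Then Q(·,t) is continuous and ℤ^d-periodic, and for every k ∈ ℤ^d its Fourier coefficient satisfies ∫_{[0,1]^d} Q(x,t) e^{−2πi⟨k,x⟩} dx = û(k) · exp(−4π² ‖k − ⟨k,e⟩e‖² t), where û(k) = ∫_{[0,1]^d} u(x) e^{−2πi⟨k,x⟩} dx. -/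

import Mathlib

/-! Translating a `ℤ^d`-periodic function by `y` multiplies its `k`-th Fourier coefficient by
`exp (2πi⟪k, y⟫)`. Since `Q(·, t)` averages the translates `u(· + y)`, `y ∈ e^⊥`, against the heat
kernel of `e^⊥`, Fubini turns its `k`-th coefficient into `û(k)` times the Fourier transform of that
heat kernel at `⟪k, ·⟫ = ⟪P k, ·⟫` on `e^⊥`, where `P k = k - ⟪k, e⟫ e` is the orthogonal projection
onto `e^⊥`. The Fourier transform of the Gaussian is the Gaussian `exp (-4π² ‖P k‖² t)`. -/

open Set Filter Topology MeasureTheory RealInnerProductSpace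

noncomputable section

abbrev Euc (d : ℕ) := EuclideanSpace ℝ (Fin d)

def IsIntVec {d : ℕ} (z : Euc d) : Prop := ∀ i, ∃ n : ℤ, z i = (n : ℝ)

def unitCube (d : ℕ) : Set (Euc d) := {y | ∀ i, y i ∈ Set.Icc (0:ℝ) 1}

open scoped Pointwise

section Periodic

variable {d : ℕ}

def IsIntPeriodic {α : Type*} (f : Euc d → α) : Prop := ∀ x z, IsIntVec z → f (x + z) = f x

theorem unitCube_eq_parallelepiped :
    unitCube d = parallelepiped (EuclideanSpace.basisFun (Fin d) ℝ).toBasis := by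
  rw [parallelepiped_basis_eq]
  rfl

theorem isCompact_unitCube : IsCompact (unitCube d) := by
  rw [unitCube_eq_parallelepiped]
  exact (EuclideanSpace.basisFun (Fin d) ℝ).toBasis.parallelepiped.isCompact

theorem isIntVec_of_mem_span_basisFun {z : Euc d}
    (hz : z ∈ Submodule.span ℤ (range (EuclideanSpace.basisFun (Fin d) ℝ).toBasis)) :
    IsIntVec z := fun i => by
  rw [Module.Basis.mem_span_iff_repr_mem] at hz
  obtain ⟨n, hn⟩ := hz i
  exact ⟨n, by simpa using hn.symm⟩

theorem IsIntVec.exists_inner_eq_intCast {k z : Euc d} (hk : IsIntVec k) (hz : IsIntVec z) :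
    ∃ n : ℤ, ⟪k, z⟫ = n := by
  choose a ha using hk
  choose b hb using hz
  exact ⟨∑ i, b i * a i, by simp [PiLp.inner_apply, ha, hb]⟩

theorem IsIntPeriodic.exists_norm_le {E : Type*} [NormedAddCommGroup E] {u : Euc d → E}
    (hper : IsIntPeriodic u) (hu : Continuous u) : ∃ C, ∀ x, ‖u x‖ ≤ C := by
  obtain ⟨C, hC⟩ := isCompact_unitCube.exists_bound_of_continuousOn hu.continuousOn
  refine ⟨C, fun x => ?_⟩
  let n : Euc d := WithLp.toLp 2 fun i => (⌊x i⌋ : ℝ)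
  rw [← sub_add_cancel x n, hper _ n fun i => ⟨⌊x i⌋, rfl⟩]
  exact hC _ fun i => ⟨by simp [n, Int.fract_nonneg], by simp [n, (Int.fract_lt_one _).le]⟩

/-- Up to null sets, the unit cube and its translates are fundamental domains of `ℤ^d`. -/
theorem IsIntPeriodic.setIntegral_unitCube_comp_add_right {E : Type*} [NormedAddCommGroup E]
    [NormedSpace ℝ E] {g : Euc d → E} (hg : IsIntPeriodic g) (y : Euc d) :
    ∫ x in unitCube d, g (x + y) = ∫ x in unitCube d, g x := by
  set b := (EuclideanSpace.basisFun (Fin d) ℝ).toBasis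
  set F := ZSpan.fundamentalDomain b
  have : Countable (Submodule.span ℤ (range b)).toAddSubgroup :=
    inferInstanceAs (Countable (Submodule.span ℤ (range b)))
  have hF := ZSpan.isAddFundamentalDomain' b (volume : Measure (Euc d))
  have hcube : unitCube d =ᵐ[volume] F :=
    unitCube_eq_parallelepiped (d := d) ▸ (ZSpan.fundamentalDomain_ae_parallelepiped b volume).symm
  calc ∫ x in unitCube d, g (x + y) = ∫ x in F, g (y + x) := by
        simp_rw [add_comm _ y]; exact setIntegral_congr_set hcube
    _ = ∫ x in y +ᵥ F, g x :=
        ((measurePreserving_add_left volume y).setIntegral_image_emb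
          (MeasurableEquiv.addLeft y).measurableEmbedding g F).symm
    _ = ∫ x in F, g x := (hF.vadd_of_comm y).setIntegral_eq hF fun γ x =>
        (congrArg g (add_comm _ _)).trans (hg x γ (isIntVec_of_mem_span_basisFun γ.2))
    _ = ∫ x in unitCube d, g x := (setIntegral_congr_set hcube).symm

def cubeChar (k x : Euc d) : ℂ := Complex.exp (-(2 * Real.pi * Complex.I) * ⟪k, x⟫)

def cubeFourierCoeff (f : Euc d → ℂ) (k : Euc d) : ℂ := ∫ x in unitCube d, f x * cubeChar k x

theorem continuous_cubeChar (k : Euc d) : Continuous (cubeChar k) := by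
  unfold cubeChar; fun_prop

theorem norm_cubeChar (k x : Euc d) : ‖cubeChar k x‖ = 1 := by
  rw [cubeChar, Complex.norm_exp]
  simp

theorem cubeChar_add (k x y : Euc d) : cubeChar k (x + y) = cubeChar k x * cubeChar k y := by
  simp only [cubeChar, inner_add_right, Complex.ofReal_add, mul_add, Complex.exp_add]

theorem isIntPeriodic_cubeChar {k : Euc d} (hk : IsIntVec k) : IsIntPeriodic (cubeChar k) := by
  intro x z hz
  obtain ⟨n, hn⟩ := hk.exists_inner_eq_intCast hz
  have hz1 : cubeChar k z = 1 := by
    rw [cubeChar, hn, Complex.ofReal_intCast, neg_mul, mul_comm, ← neg_mul, ← Int.cast_neg,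
      Complex.exp_int_mul_two_pi_mul_I]
  rw [cubeChar_add, hz1, mul_one]

theorem IsIntPeriodic.cubeFourierCoeff_comp_add_right {u : Euc d → ℂ} (hu : IsIntPeriodic u)
    {k : Euc d} (hk : IsIntVec k) (y : Euc d) :
    cubeFourierCoeff (fun x => u (x + y)) k =
      Complex.exp (2 * Real.pi * Complex.I * ⟪k, y⟫) * cubeFourierCoeff u k := by
  have hshift : ∀ x, u (x + y) * cubeChar k x =
      Complex.exp (2 * Real.pi * Complex.I * ⟪k, y⟫) * (u (x + y) * cubeChar k (x + y)) := by
    intro x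
    simp only [cubeChar, inner_add_right, Complex.ofReal_add]
    rw [mul_left_comm, ← Complex.exp_add]
    ring_nf
  have hper : IsIntPeriodic fun x => u x * cubeChar k x := fun x z hz => by
    dsimp only
    rw [hu x z hz, isIntPeriodic_cubeChar hk x z hz]
  simp only [cubeFourierCoeff, hshift, integral_const_mul,
    hper.setIntegral_unitCube_comp_add_right y]

end Periodic

section HeatKernel

variable (V : Type*) [NormedAddCommGroup V] [InnerProductSpace ℝ V]

def heatKernel (t : ℝ) (y : V) : ℝ :=
  (4 * Real.pi * t) ^ (-(Module.finrank ℝ V : ℝ) / 2) * Real.exp (-‖y‖ ^ 2 / (4 * t))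

variable {V} [FiniteDimensional ℝ V] [MeasurableSpace V] [BorelSpace V]

theorem integrable_heatKernel {t : ℝ} (ht : 0 < t) : Integrable (heatKernel V t) := by
  refine (Integrable.of_integral_ne_zero ?_).const_mul _
  have := GaussianFourier.integral_rexp_neg_mul_sq_norm (V := V) (by positivity : 0 < (4 * t)⁻¹)
  simp_rw [neg_mul, ← div_eq_inv_mul, ← neg_div] at this
  rw [this]
  positivity

theorem integral_cexp_inner_mul_heatKernel {t : ℝ} (ht : 0 < t) (w : V) :
    ∫ y, Complex.exp (2 * Real.pi * Complex.I * ⟪w, y⟫) * heatKernel V t y =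
      Complex.exp (-(4 * Real.pi ^ 2 * ‖w‖ ^ 2 * t)) := by
  have hb : 0 < ((4 * t : ℂ)⁻¹).re := by norm_cast; positivity
  have hpos : 0 < 4 * Real.pi * t := by positivity
  have hkernel : ∀ y : V, Complex.exp (2 * Real.pi * Complex.I * ⟪w, y⟫) * heatKernel V t y =
      ((4 * Real.pi * t) ^ (-(Module.finrank ℝ V : ℝ) / 2) : ℝ) *
        Complex.exp (-(4 * t : ℂ)⁻¹ * ‖y‖ ^ 2 + 2 * Real.pi * Complex.I * ⟪w, y⟫) := by
    intro y
    simp only [heatKernel, Complex.ofReal_mul, Complex.ofReal_exp, Complex.exp_add]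
    push_cast
    ring_nf
  simp_rw [hkernel]
  rw [integral_const_mul, GaussianFourier.integral_cexp_neg_mul_sq_norm_add hb, ← mul_assoc]
  have hcancel : (((4 * Real.pi * t) ^ (-(Module.finrank ℝ V : ℝ) / 2) : ℝ) : ℂ) *
      (Real.pi / (4 * t : ℂ)⁻¹) ^ (Module.finrank ℝ V / 2 : ℂ) = 1 := by
    rw [div_inv_eq_mul,
      show (Real.pi * (4 * t) : ℂ) = ((4 * Real.pi * t : ℝ) : ℂ) by push_cast; ring,
      ← Complex.ofReal_natCast, ← Complex.ofReal_ofNat, ← Complex.ofReal_div,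
      ← Complex.ofReal_cpow hpos.le, ← Complex.ofReal_mul, ← Real.rpow_add hpos, neg_div,
      neg_add_cancel, Real.rpow_zero, Complex.ofReal_one]
  rw [hcancel, one_mul]
  congr 1
  field_simp
  rw [Complex.I_sq]
  ring

end HeatKernel

section Subspace

variable {E : Type*} [NormedAddCommGroup E] [InnerProductSpace ℝ E]

theorem norm_orthogonalProjectionOnto_orthogonal_span_singleton {e : E} (he : ‖e‖ = 1) (k : E) :
    ‖(ℝ ∙ e)ᗮ.orthogonalProjectionOnto k‖ = ‖k - ⟪k, e⟫ • e‖ := by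
  change ‖(ℝ ∙ e)ᗮ.starProjection k‖ = _
  rw [Submodule.starProjection_orthogonal_val, Submodule.starProjection_singleton, he,
    real_inner_comm]
  simp

variable [FiniteDimensional ℝ E]

theorem cast_finrank_orthogonal_span_singleton {e : E} (he : e ≠ 0) :
    (Module.finrank ℝ (ℝ ∙ e)ᗮ : ℝ) = Module.finrank ℝ E - 1 := by
  rw [← (ℝ ∙ e).finrank_add_finrank_orthogonal, finrank_span_singleton he]
  push_cast
  ring

variable [MeasurableSpace E] [BorelSpace E] {S : Submodule ℝ E}

theorem continuous_integral_comp_add_mul {u : E → ℂ} (hu : Continuous u) {C : ℝ}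
    (hC : ∀ x, ‖u x‖ ≤ C) {K : S → ℂ} (hK : Integrable K) :
    Continuous fun x => ∫ y : S, u (x + (y : E)) * K y := by
  refine continuous_of_dominated (bound := fun y => C * ‖K y‖)
    (fun x => ((hu.comp (by fun_prop)).aestronglyMeasurable).mul hK.aestronglyMeasurable)
    (fun x => ae_of_all _ fun y => ?_) (hK.norm.const_mul C)
    (ae_of_all _ fun y => (hu.comp (by fun_prop)).mul continuous_const)
  rw [norm_mul]
  exact mul_le_mul_of_nonneg_right (hC _) (norm_nonneg _)

theorem integral_cexp_inner_mul_heatKernel_submodule {t : ℝ} (ht : 0 < t) (k : E) :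
    ∫ y : S, Complex.exp (2 * Real.pi * Complex.I * ⟪k, (y : E)⟫) * heatKernel S t y =
      Complex.exp (-(4 * Real.pi ^ 2 * ‖S.orthogonalProjectionOnto k‖ ^ 2 * t)) := by
  have hproj (y : S) : ⟪k, (y : E)⟫ = ⟪S.orthogonalProjectionOnto k, y⟫ :=
    (S.inner_orthogonalProjectionOnto_eq_of_mem_right y k).symm
  simp_rw [hproj]
  exact integral_cexp_inner_mul_heatKernel ht _

end Subspace

theorem cubeFourierCoeff_integral_comp_add_mul {d : ℕ} {S : Submodule ℝ (Euc d)}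
    {u : Euc d → ℂ} (hper : IsIntPeriodic u) (hu : Continuous u) {K : S → ℂ} (hK : Integrable K)
    {k : Euc d} (hk : IsIntVec k) :
    cubeFourierCoeff (fun x => ∫ y : S, u (x + (y : Euc d)) * K y) k =
      cubeFourierCoeff u k *
        ∫ y : S, Complex.exp (2 * Real.pi * Complex.I * ⟪k, (y : Euc d)⟫) * K y := by
  obtain ⟨C, hC⟩ := hper.exists_norm_le hu
  have : IsFiniteMeasure (volume.restrict (unitCube d)) :=
    isFiniteMeasure_restrict.2 isCompact_unitCube.measure_lt_top.ne
  have hint : Integrable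
      (Function.uncurry fun x (y : S) => u (x + (y : Euc d)) * K y * cubeChar k x)
      ((volume.restrict (unitCube d)).prod volume) := by
    have hushift : Continuous fun p : Euc d × S => u (p.1 + p.2) := hu.comp (by fun_prop)
    have hchar : Continuous fun p : Euc d × S => cubeChar k p.1 :=
      (continuous_cubeChar k).comp continuous_fst
    refine Integrable.mono' ((integrable_const C).mul_prod hK.norm) ?_ (ae_of_all _ fun p => ?_)
    · exact (hushift.aestronglyMeasurable.mul hK.aestronglyMeasurable.comp_snd).mul
        hchar.aestronglyMeasurable
    · simp only [Function.uncurry, norm_mul, norm_cubeChar, mul_one]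
      exact mul_le_mul_of_nonneg_right (hC _) (norm_nonneg _)
  calc cubeFourierCoeff (fun x => ∫ y : S, u (x + (y : Euc d)) * K y) k
      = ∫ x in unitCube d, ∫ y : S, u (x + (y : Euc d)) * K y * cubeChar k x := by
        simp only [cubeFourierCoeff, integral_mul_const]
    _ = ∫ y : S, cubeFourierCoeff (fun x => u (x + (y : Euc d))) k * K y := by
        rw [integral_integral_swap hint]
        simp only [cubeFourierCoeff, ← integral_mul_const, mul_right_comm _ (K _)]
    _ = cubeFourierCoeff u k *
          ∫ y : S, Complex.exp (2 * Real.pi * Complex.I * ⟪k, (y : Euc d)⟫) * K y := by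
        simp only [hper.cubeFourierCoeff_comp_add_right hk, ← integral_const_mul]
        congr 1 with y
        ring

/-- The hyperplane ⟨e⟩^⊥ is realized as the orthogonal complement (ℝ ∙ e)ᗮ with its canonical
(surface) measure as a finite-dimensional inner product space. -/
theorem fourier_coefficients_hyperplane_average_general (d : ℕ)
    (e : Euc d) (he : ‖e‖ = 1)
    (u : Euc d → ℂ) (hu : Continuous u)
    (huper : ∀ (x z : Euc d), IsIntVec z → u (x + z) = u x)
    (Q : Euc d → ℝ → ℂ)
    (hQ : ∀ (x : Euc d) (t : ℝ), Q x t =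
      ∫ y : (ℝ ∙ e)ᗮ,
        u (x + (y : Euc d)) *
          (((4 * Real.pi * t) ^ (-((d : ℝ) - 1) / 2) *
            Real.exp (-‖(y : Euc d)‖ ^ 2 / (4 * t)) : ℝ) : ℂ)) :
    ∀ t > 0,
      Continuous (fun x => Q x t) ∧
      (∀ (x z : Euc d), IsIntVec z → Q (x + z) t = Q x t) ∧
      ∀ k : Euc d, IsIntVec k →
        (∫ x in unitCube d,
            Q x t * Complex.exp (-(2 * Real.pi * Complex.I) * ((⟪k, x⟫ : ℝ) : ℂ)))
          = (∫ x in unitCube d,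
              u x * Complex.exp (-(2 * Real.pi * Complex.I) * ((⟪k, x⟫ : ℝ) : ℂ)))
            * Complex.exp
              ((-(4 * Real.pi ^ 2 * ‖k - (⟪k, e⟫ : ℝ) • e‖ ^ 2 * t) : ℝ) : ℂ) := by
  intro t ht
  have he0 : e ≠ 0 := by rintro rfl; simp at he
  have hQ_heat : (fun x => Q x t) =
      fun x => ∫ y : (ℝ ∙ e)ᗮ, u (x + (y : Euc d)) * heatKernel (ℝ ∙ e)ᗮ t y := by
    ext x
    simp only [hQ, heatKernel, cast_finrank_orthogonal_span_singleton he0,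
      finrank_euclideanSpace_fin, Submodule.coe_norm]
  have hK : Integrable fun y => (heatKernel (ℝ ∙ e)ᗮ t y : ℂ) := (integrable_heatKernel ht).ofReal
  obtain ⟨C, hC⟩ := IsIntPeriodic.exists_norm_le huper hu
  refine ⟨hQ_heat ▸ continuous_integral_comp_add_mul hu hC hK, fun x z hz => ?_, fun k hk => ?_⟩
  · simp only [congrFun hQ_heat, add_right_comm x z, huper _ z hz]
  · change cubeFourierCoeff (fun x => Q x t) k = cubeFourierCoeff u k * _
    rw [hQ_heat, cubeFourierCoeff_integral_comp_add_mul huper hu hK hk,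
      integral_cexp_inner_mul_heatKernel_submodule ht,
      norm_orthogonalProjectionOnto_orthogonal_span_singleton he]
    norm_cast

/-- Fourier coefficients of the hyperplane-averaged function.  The hyperplane
⟨e⟩^⊥ is realized as the orthogonal complement (ℝ ∙ e)ᗮ with its canonical
(surface) measure as a finite-dimensional inner product space. -/
theorem fourier_coefficients_hyperplane_average (d : ℕ) (hd : 2 ≤ d)
    (e : Euc d) (he : ‖e‖ = 1)
    (u : Euc d → ℂ) (hu : Continuous u)
    (huper : ∀ (x z : Euc d), IsIntVec z → u (x + z) = u x)
    (Q : Euc d → ℝ → ℂ)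
    (hQ : ∀ (x : Euc d) (t : ℝ), Q x t =
      ∫ y : (ℝ ∙ e)ᗮ,
        u (x + (y : Euc d)) *
          (((4 * Real.pi * t) ^ (-((d : ℝ) - 1) / 2) *
            Real.exp (-‖(y : Euc d)‖ ^ 2 / (4 * t)) : ℝ) : ℂ)) :
    ∀ t > 0,
      Continuous (fun x => Q x t) ∧
      (∀ (x z : Euc d), IsIntVec z → Q (x + z) t = Q x t) ∧
      ∀ k : Euc d, IsIntVec k →
        (∫ x in unitCube d,
            Q x t * Complex.exp (-(2 * Real.pi * Complex.I) * ((⟪k, x⟫ : ℝ) : ℂ)))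
          = (∫ x in unitCube d,
              u x * Complex.exp (-(2 * Real.pi * Complex.I) * ((⟪k, x⟫ : ℝ) : ℂ)))
            * Complex.exp
              ((-(4 * Real.pi ^ 2 * ‖k - (⟪k, e⟫ : ℝ) • e‖ ^ 2 * t) : ℝ) : ℂ) :=
  fourier_coefficients_hyperplane_average_general d e he u hu huper Q hQ

end
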